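/- Let Ω be a compact metric space, T a homeomorphism of Ω, and A: Ω → GL(2,ℂ) continuous with |det A(ω)| = 1. If the cocycle (T,A) admits an invariant exponential splitting, then it does not admit a Sacker–Sell solution; that is, for every ω ∈ Ω and every unit vector v ∈ ℂ², there exists n ∈ ℤ with ‖Aⁿ(ω)v‖ > 1. -/

import Mathlib

/-! Since Λˢ(ω) ≠ Λᵘ(ω) are lines in ℂ², every unit vector splits as v = s + u with s ∈ Λˢ(ω),
u ∈ Λᵘ(ω). Invariance and the cocycle identity A⁻ⁿ(Tⁿω) = Aⁿ(ω)⁻¹ turn the two contraction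
estimates into expansion estimates: Aⁿ(ω) stretches Λᵘ(ω), and A⁻ⁿ(ω) stretches Λˢ(ω), by at
least Lⁿ/c. If u ≠ 0 then ‖Aⁿ(ω)v‖ ≥ ‖Aⁿ(ω)u‖ - ‖Aⁿ(ω)s‖ → ∞ as n → ∞; otherwise v ∈ Λˢ(ω)
and ‖A⁻ⁿ(ω)v‖ → ∞. -/

noncomputable section

abbrev E2 := EuclideanSpace ℂ (Fin 2)
abbrev M2 := Matrix (Fin 2) (Fin 2) ℂ

noncomputable def mulV (M : M2) (v : E2) : E2 :=
  Matrix.toEuclideanCLM (𝕜 := ℂ) (n := Fin 2) M v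

variable {Ω : Type*} [MetricSpace Ω]

noncomputable def fwd (T : Ω ≃ₜ Ω) (A : Ω → M2) : ℕ → Ω → M2
  | 0, _ => 1
  | n + 1, ω => fwd T A n (T ω) * A ω

noncomputable def coc (T : Ω ≃ₜ Ω) (A : Ω → M2) (n : ℤ) (ω : Ω) : M2 :=
  if 0 ≤ n then fwd T A n.toNat ω
  else (fwd T A (-n).toNat ((⇑T.symm)^[(-n).toNat] ω))⁻¹

/-- The orthogonal projection onto a (finite-dimensional) subspace `V ⊆ ℂ²`,
viewed as an operator `ℂ² → ℂ²`.  Continuity of `ω ↦ projCLM (Λ ω)` encodes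
continuity of the line field `Λ : Ω → ℂP¹`. -/
noncomputable def projCLM (V : Submodule ℂ E2) : E2 →L[ℂ] E2 :=
  V.subtypeL.comp (V.orthogonalProjectionOnto)

open Filter Topology

lemma Submodule.sup_eq_top_of_finrank_eq_one {K V : Type*} [DivisionRing K] [AddCommGroup V]
    [Module K V] [FiniteDimensional K V] (hV : Module.finrank K V = 2) {P Q : Submodule K V}
    (hP : Module.finrank K P = 1) (hQ : Module.finrank K Q = 1) (hPQ : P ≠ Q) : P ⊔ Q = ⊤ := by
  have hlt : P < P ⊔ Q := by
    refine lt_of_le_of_ne le_sup_left fun h => hPQ ?_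
    exact (Submodule.eq_of_le_of_finrank_eq (h ▸ le_sup_right) (hQ.trans hP.symm)).symm
  have := Submodule.finrank_lt_finrank_of_lt hlt
  have := Submodule.finrank_le (P ⊔ Q)
  exact Submodule.eq_top_of_finrank_eq (by omega)

lemma tendsto_atTop_of_le_mul_inv_pow {f : ℕ → ℝ} {a c L : ℝ} (ha : 0 < a) (hc : 0 < c)
    (hL : 1 < L) (h : ∀ n, a ≤ c * (L ^ n)⁻¹ * f n) : Tendsto f atTop atTop := by
  refine tendsto_atTop_mono (fun n => ?_)
    ((tendsto_pow_atTop_atTop_of_one_lt hL).const_mul_atTop (div_pos ha hc))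
  have hLn : 0 < L ^ n := pow_pos (zero_lt_one.trans hL) n
  calc a / c * L ^ n ≤ c * (L ^ n)⁻¹ * f n / c * L ^ n := by gcongr; exact h n
    _ = f n := by field_simp

lemma tendsto_mul_inv_pow_mul_nhds_zero (c a : ℝ) {L : ℝ} (hL : 1 < L) :
    Tendsto (fun n : ℕ => c * (L ^ n)⁻¹ * a) atTop (𝓝 0) := by
  simpa using
    ((tendsto_inv_atTop_zero.comp (tendsto_pow_atTop_atTop_of_one_lt hL)).const_mul c).mul_const a

lemma mulV_mul (M N : M2) (v : E2) : mulV (M * N) v = mulV M (mulV N v) := by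
  simp [mulV, map_mul]

lemma mulV_add (M : M2) (u v : E2) : mulV M (u + v) = mulV M u + mulV M v :=
  map_add _ u v

lemma mulV_inv_mulV {M : M2} (hM : IsUnit M) (v : E2) : mulV M⁻¹ (mulV M v) = v := by
  rw [← mulV_mul, Matrix.nonsing_inv_mul M ((Matrix.isUnit_iff_isUnit_det M).mp hM)]
  simp [mulV]

def IsCocycleInvariant (T : Ω ≃ₜ Ω) (A : Ω → M2) (Λ : Ω → Submodule ℂ E2) : Prop :=
  ∀ ω, Submodule.map (Matrix.toEuclideanCLM (𝕜 := ℂ) (n := Fin 2) (A ω)).toLinearMap (Λ ω) = Λ (T ω)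

section Cocycle

variable {T : Ω ≃ₜ Ω} {A : Ω → M2}

lemma isUnit_fwd (hA : ∀ ω, IsUnit (A ω)) : ∀ (n : ℕ) (ω : Ω), IsUnit (fwd T A n ω)
  | 0, _ => isUnit_one
  | n + 1, ω => (isUnit_fwd hA n (T ω)).mul (hA ω)

lemma coc_natCast (n : ℕ) (ω : Ω) : coc T A n ω = fwd T A n ω := by
  simp [coc]

lemma isUnit_coc_natCast (hA : ∀ ω, IsUnit (A ω)) (n : ℕ) (ω : Ω) : IsUnit (coc T A n ω) := by
  rw [coc_natCast]
  exact isUnit_fwd hA n ω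

lemma coc_neg_natCast_iterate (n : ℕ) (ω : Ω) :
    coc T A (-(n : ℤ)) (T^[n] ω) = (coc T A n ω)⁻¹ := by
  rcases n with _ | n
  · simp [coc, fwd]
  · rw [coc, if_neg (by omega), neg_neg, Int.toNat_natCast,
      Function.LeftInverse.iterate T.symm_apply_apply, coc_natCast]

lemma IsCocycleInvariant.map_fwd {Λ : Ω → Submodule ℂ E2} (hΛ : IsCocycleInvariant T A Λ) :
    ∀ (n : ℕ) (ω : Ω), Submodule.map
      (Matrix.toEuclideanCLM (𝕜 := ℂ) (n := Fin 2) (fwd T A n ω)).toLinearMap (Λ ω) = Λ (T^[n] ω)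
  | 0, ω => by simp [fwd, Module.End.one_eq_id]
  | n + 1, ω => by
    rw [fwd, map_mul, ContinuousLinearMap.mul_def, ContinuousLinearMap.toLinearMap_comp,
      Submodule.map_comp, hΛ ω, hΛ.map_fwd n (T ω), Function.iterate_succ_apply]

variable {Λs Λu : Ω → Submodule ℂ E2} {c L : ℝ}

lemma norm_le_mul_norm_mulV_coc_of_mem_unstable (hA : ∀ ω, IsUnit (A ω))
    (hΛ : IsCocycleInvariant T A Λu)
    (hdec : ∀ (n : ℕ) (ω : Ω), ∀ v ∈ Λu ω,
      ‖mulV (coc T A (-(n : ℤ)) ω) v‖ ≤ c * (L ^ n)⁻¹ * ‖v‖)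
    {ω : Ω} {u : E2} (hu : u ∈ Λu ω) (n : ℕ) :
    ‖u‖ ≤ c * (L ^ n)⁻¹ * ‖mulV (coc T A n ω) u‖ := by
  have hw : mulV (coc T A n ω) u ∈ Λu (T^[n] ω) := by
    rw [← hΛ.map_fwd n ω, coc_natCast]
    exact Submodule.mem_map_of_mem hu
  simpa only [coc_neg_natCast_iterate, mulV_inv_mulV (isUnit_coc_natCast hA n ω)]
    using hdec n _ _ hw

lemma norm_le_mul_norm_mulV_coc_neg_of_mem_stable (hA : ∀ ω, IsUnit (A ω))
    (hΛ : IsCocycleInvariant T A Λs)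
    (hdec : ∀ (n : ℕ) (ω : Ω), ∀ v ∈ Λs ω, ‖mulV (coc T A n ω) v‖ ≤ c * (L ^ n)⁻¹ * ‖v‖)
    {ω : Ω} {s : E2} (hs : s ∈ Λs ω) (n : ℕ) :
    ‖s‖ ≤ c * (L ^ n)⁻¹ * ‖mulV (coc T A (-(n : ℤ)) ω) s‖ := by
  obtain ⟨σ, rfl⟩ : ∃ σ, T^[n] σ = ω :=
    ⟨T.symm^[n] ω, Function.LeftInverse.iterate T.apply_symm_apply n ω⟩
  rw [← hΛ.map_fwd n σ, ← coc_natCast] at hs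
  obtain ⟨s', hs', rfl⟩ := hs
  change ‖mulV (coc T A n σ) s'‖ ≤ c * (L ^ n)⁻¹ * ‖mulV _ (mulV (coc T A n σ) s')‖
  rw [coc_neg_natCast_iterate, mulV_inv_mulV (isUnit_coc_natCast hA n σ)]
  exact hdec n σ s' hs'

lemma tendsto_norm_mulV_coc_add_atTop (hc : 0 < c) (hL : 1 < L) (hA : ∀ ω, IsUnit (A ω))
    (hΛu : IsCocycleInvariant T A Λu)
    (hdecs : ∀ (n : ℕ) (ω : Ω), ∀ v ∈ Λs ω, ‖mulV (coc T A n ω) v‖ ≤ c * (L ^ n)⁻¹ * ‖v‖)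
    (hdecu : ∀ (n : ℕ) (ω : Ω), ∀ v ∈ Λu ω,
      ‖mulV (coc T A (-(n : ℤ)) ω) v‖ ≤ c * (L ^ n)⁻¹ * ‖v‖)
    {ω : Ω} {s u : E2} (hs : s ∈ Λs ω) (hu : u ∈ Λu ω) (hu0 : u ≠ 0) :
    Tendsto (fun n : ℕ => ‖mulV (coc T A n ω) (s + u)‖) atTop atTop := by
  have hgrowth : Tendsto (fun n : ℕ => ‖mulV (coc T A n ω) u‖) atTop atTop :=
    tendsto_atTop_of_le_mul_inv_pow (norm_pos_iff.2 hu0) hc hL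
      (norm_le_mul_norm_mulV_coc_of_mem_unstable hA hΛu hdecu hu)
  have hdecay : Tendsto (fun n : ℕ => ‖mulV (coc T A n ω) s‖) atTop (𝓝 0) :=
    squeeze_zero (fun _ => norm_nonneg _) (fun n => hdecs n ω s hs)
      (tendsto_mul_inv_pow_mul_nhds_zero c ‖s‖ hL)
  refine tendsto_atTop_mono (fun n => ?_) (hgrowth.atTop_add hdecay.neg)
  have h := norm_sub_le (mulV (coc T A n ω) s + mulV (coc T A n ω) u) (mulV (coc T A n ω) s)
  rw [add_sub_cancel_left, ← mulV_add] at h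
  linarith

end Cocycle

theorem splitting_implies_no_SackerSell_general
    (T : Ω ≃ₜ Ω) (A : Ω → M2)
    (hinv : ∀ ω, IsUnit (A ω))
    (c : ℝ) (hc : 0 < c) (L : ℝ) (hL : 1 < L)
    (Λs Λu : Ω → Submodule ℂ E2)
    (hranks : ∀ ω, Module.finrank ℂ (Λs ω) = 1)
    (hranku : ∀ ω, Module.finrank ℂ (Λu ω) = 1)
    (hinvs : ∀ ω, Submodule.map
      (Matrix.toEuclideanCLM (𝕜 := ℂ) (n := Fin 2) (A ω)).toLinearMap (Λs ω) = Λs (T ω))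
    (hinvu : ∀ ω, Submodule.map
      (Matrix.toEuclideanCLM (𝕜 := ℂ) (n := Fin 2) (A ω)).toLinearMap (Λu ω) = Λu (T ω))
    (hdecs : ∀ (n : ℕ) (ω : Ω), ∀ v ∈ Λs ω,
      ‖mulV (coc T A n ω) v‖ ≤ c * (L ^ n)⁻¹ * ‖v‖)
    (hdecu : ∀ (n : ℕ) (ω : Ω), ∀ v ∈ Λu ω,
      ‖mulV (coc T A (-(n : ℤ)) ω) v‖ ≤ c * (L ^ n)⁻¹ * ‖v‖)
    (hsep : ∀ ω, Λs ω ≠ Λu ω) :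
    ∀ (ω : Ω) (v : E2), ‖v‖ = 1 → ∃ n : ℤ, 1 < ‖mulV (coc T A n ω) v‖ := by
  intro ω v hv
  have hv0 : v ≠ 0 := norm_ne_zero_iff.mp (hv ▸ one_ne_zero)
  have hspan : Λs ω ⊔ Λu ω = ⊤ := Submodule.sup_eq_top_of_finrank_eq_one
    finrank_euclideanSpace_fin (hranks ω) (hranku ω) (hsep ω)
  obtain ⟨s, hs, u, hu, rfl⟩ := Submodule.mem_sup.mp (hspan ▸ Submodule.mem_top : v ∈ Λs ω ⊔ Λu ω)
  by_cases hu0 : u = 0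
  · subst hu0
    rw [add_zero] at hv0 ⊢
    obtain ⟨n, hn⟩ := (tendsto_atTop_of_le_mul_inv_pow (norm_pos_iff.2 hv0) hc hL
      (norm_le_mul_norm_mulV_coc_neg_of_mem_stable hinv hinvs hdecs hs)
      |>.eventually_gt_atTop 1).exists
    exact ⟨-n, hn⟩
  · obtain ⟨n, hn⟩ := (tendsto_norm_mulV_coc_add_atTop hc hL hinv hinvu hdecs hdecu hs hu hu0
      |>.eventually_gt_atTop 1).exists
    exact ⟨n, hn⟩

/-- an invariant exponential splitting precludes Sacker–Sell
solutions: every unit vector has an iterate of norm `> 1`. -/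
theorem splitting_implies_no_SackerSell [CompactSpace Ω]
    (T : Ω ≃ₜ Ω) (A : Ω → M2) (hA : Continuous A)
    (hinv : ∀ ω, IsUnit (A ω)) (hdet : ∀ ω, ‖(A ω).det‖ = 1)
    (c : ℝ) (hc : 0 < c) (L : ℝ) (hL : 1 < L)
    (Λs Λu : Ω → Submodule ℂ E2)
    (hranks : ∀ ω, Module.finrank ℂ (Λs ω) = 1)
    (hranku : ∀ ω, Module.finrank ℂ (Λu ω) = 1)
    (hconts : Continuous fun ω => projCLM (Λs ω))
    (hcontu : Continuous fun ω => projCLM (Λu ω))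
    (hinvs : ∀ ω, Submodule.map
      (Matrix.toEuclideanCLM (𝕜 := ℂ) (n := Fin 2) (A ω)).toLinearMap (Λs ω) = Λs (T ω))
    (hinvu : ∀ ω, Submodule.map
      (Matrix.toEuclideanCLM (𝕜 := ℂ) (n := Fin 2) (A ω)).toLinearMap (Λu ω) = Λu (T ω))
    (hdecs : ∀ (n : ℕ) (ω : Ω), ∀ v ∈ Λs ω,
      ‖mulV (coc T A n ω) v‖ ≤ c * (L ^ n)⁻¹ * ‖v‖)
    (hdecu : ∀ (n : ℕ) (ω : Ω), ∀ v ∈ Λu ω,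
      ‖mulV (coc T A (-(n : ℤ)) ω) v‖ ≤ c * (L ^ n)⁻¹ * ‖v‖)
    (hsep : ∀ ω, Λs ω ≠ Λu ω) :
    ∀ (ω : Ω) (v : E2), ‖v‖ = 1 → ∃ n : ℤ, 1 < ‖mulV (coc T A n ω) v‖ :=
  splitting_implies_no_SackerSell_general T A hinv c hc L hL Λs Λu hranks hranku hinvs hinvu hdecs
    hdecu hsep

end
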